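/- arXiv:2205.11391 — 3 statements merged into one kernel-verified Lean document; each statement's English description precedes it below -/
import Mathlib

section
/- Let E be a connected, locally path-connected topological space, let S ⊆ E be a path-connected, locally path-connected subspace with inclusion map i : S → E, and let x ∈ S. Let p : Ẽ → E be a covering map with Ẽ path-connected, and let x̂ ∈ p⁻¹(x) be such that p_*(π₁(Ẽ, x̂)) = i_*(π₁(S, x)) as subgroups of π₁(E, x). If in addition p is a normal covering, i.e. p_*(π₁(Ẽ, x̂)) is a normal subgroup of π₁(E, x), then p maps every path component of p⁻¹(S) homeomorphically onto S. -/
/-!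
Moving the base point along a path conjugates the image of `π₁` under a continuous map, and
conjugating a normal subgroup along two different paths gives the same subgroup. So once
`p_*π₁(E', x̂) = i_*π₁(S, x)` is normal, `p_*π₁(E', ŷ) = i_*π₁(S, p ŷ)` for every `ŷ` over `S`,
and the lifting criterion lifts the inclusion `S → E` to a section of `p` through `ŷ`. Its image
is the path component of `ŷ` in `p⁻¹(S)`, on which it inverts `p` by uniqueness of lifts.
-/

open CategoryTheory

universe u

noncomputable def piMap {X Y : Type u} [TopologicalSpace X] [TopologicalSpace Y]
    (f : C(X, Y)) (x : X) :
    FundamentalGroup X x →* FundamentalGroup Y (f x) :=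
  CategoryTheory.Functor.mapEnd (X := FundamentalGroupoid.mk x)
    (FundamentalGroupoid.fundamentalGroupoidFunctor.map (X := TopCat.of X) (Y := TopCat.of Y) (TopCat.ofHom f))

namespace CategoryTheory

theorem Iso.conj_self_eq_mul_mul_inv {C : Type*} [Groupoid C] {X : C} (γ : X ≅ X) (f : End X) :
    γ.conj f = End.of γ.hom * f * (End.of γ.hom)⁻¹ := by
  have : (End.of γ.hom)⁻¹ = γ.inv := (Groupoid.inv_eq_inv γ.hom).trans (IsIso.Iso.inv_hom γ)
  rw [this, Iso.conj_apply]
  rfl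

theorem Functor.range_mapEnd_eq_map_conj {C D : Type*} [Groupoid C] [Groupoid D]
    (F : C ⥤ D) {X Y : C} (α : X ≅ Y) :
    (F.mapEnd Y).range = (F.mapEnd X).range.map (F.mapIso α).conj.toMonoidHom := by
  have h : (F.mapEnd Y).comp α.conj.toMonoidHom =
      (F.mapIso α).conj.toMonoidHom.comp (F.mapEnd X) :=
    MonoidHom.ext (F.map_conj α)
  calc (F.mapEnd Y).range = ((F.mapEnd Y).comp α.conj.toMonoidHom).range := by
        rw [MonoidHom.range_comp,
          MonoidHom.range_eq_top_of_surjective α.conj.toMonoidHom α.conj.surjective,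
          ← MonoidHom.range_eq_map]
    _ = _ := by rw [h, MonoidHom.range_comp]

end CategoryTheory

theorem Subgroup.map_conj_eq_of_normal {C : Type*} [Groupoid C] {X Y : C}
    {H : Subgroup (End X)} (hH : H.Normal) (α β : X ≅ Y) :
    H.map α.conj.toMonoidHom = H.map β.conj.toMonoidHom := by
  suffices key : ∀ α β : X ≅ Y, H.map α.conj.toMonoidHom ≤ H.map β.conj.toMonoidHom from
    le_antisymm (key α β) (key β α)
  rintro α β _ ⟨h, hh, rfl⟩
  refine ⟨β.symm.conj (α.conj h), ?_, Iso.self_symm_conj _ _⟩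
  rw [← Iso.trans_conj, Iso.conj_self_eq_mul_mul_inv]
  exact hH.conj_mem h hh _

namespace FundamentalGroup

variable {X Y : Type*} [TopologicalSpace X] [TopologicalSpace Y]

theorem mapOfEq_rfl (f : C(X, Y)) (x : X) : mapOfEq f (rfl : f x = f x) = map f x := by
  ext g
  simp [mapOfEq]

theorem exists_range_map_eq_map_conj (f : C(X, Y)) {x x' : X} (h : Joined x x') :
    ∃ α : FundamentalGroupoid.mk (f x) ≅ FundamentalGroupoid.mk (f x'),
      (map f x').range = (map f x).range.map α.conj.toMonoidHom :=
  ⟨_, (FundamentalGroupoid.map f).range_mapEnd_eq_map_conj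
    ((Groupoid.isoEquivHom _ _).symm (Path.Homotopic.Quotient.mk h.somePath))⟩

theorem range_map_subtypeVal_eq_of_normal (f : C(Y, X)) {S : Set X} (hS : IsPathConnected S)
    {y y' : Y} (hyy' : Joined y y') (hy : f y ∈ S) (hy' : f y' ∈ S)
    (hrange : (map f y).range = (map ⟨Subtype.val, continuous_subtype_val⟩ ⟨f y, hy⟩).range)
    (hnormal : (map f y).range.Normal) :
    (map ⟨Subtype.val, continuous_subtype_val⟩ ⟨f y', hy'⟩).range = (map f y').range := by
  obtain ⟨α, hα⟩ := exists_range_map_eq_map_conj f hyy'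
  obtain ⟨β, hβ⟩ := exists_range_map_eq_map_conj ⟨Subtype.val, continuous_subtype_val⟩
    (hS.joinedIn _ hy _ hy').joined_subtype
  rw [hα, hβ, ← hrange]
  exact Subgroup.map_conj_eq_of_normal hnormal β α

end FundamentalGroup

theorem IsCoveringMap.exists_homeomorph_pathComponentIn_of_lift {E E' : Type*}
    [TopologicalSpace E] [TopologicalSpace E'] {p : E' → E} (hp : IsCoveringMap p)
    {S : Set E} [PathConnectedSpace S] (F : C(S, E')) (hF : p ∘ F = Subtype.val) (s : S) :
    ∃ h : pathComponentIn (p ⁻¹' S) (F s) ≃ₜ S,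
      ∀ z : pathComponentIn (p ⁻¹' S) (F s), (h z : E) = p z := by
  set C := pathComponentIn (p ⁻¹' S) (F s)
  have hCS : C ⊆ p ⁻¹' S := pathComponentIn_subset
  have hFC : ∀ t, F t ∈ C := by
    refine fun t ↦ (isPathConnected_range F.continuous).subset_pathComponentIn ⟨s, rfl⟩ ?_ ⟨t, rfl⟩
    rintro _ ⟨t, rfl⟩
    change (p ∘ F) t ∈ S
    exact hF ▸ t.2
  have : PathConnectedSpace C :=
    isPathConnected_iff_pathConnectedSpace.mp (isPathConnected_pathComponentIn (hCS (hFC s)))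
  have hp_cont := hp.continuous
  have hsection : (fun z : C ↦ F ⟨p z, hCS z.2⟩) = Subtype.val :=
    hp.eq_of_comp_eq (by fun_prop) continuous_subtype_val (funext fun z ↦ congrFun hF _)
      ⟨F s, hFC s⟩ (congrArg F (Subtype.ext (congrFun hF s)))
  exact ⟨{ toFun z := ⟨p z, hCS z.2⟩
           invFun t := ⟨F t, hFC t⟩
           left_inv z := Subtype.ext (congrFun hsection z)
           right_inv t := Subtype.ext (congrFun hF t) }, fun _ ↦ rfl⟩

theorem every_component_homeomorphic_of_normal_general
    {E E' : Type u} [TopologicalSpace E] [TopologicalSpace E']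
    (S : Set E) (hSpc : IsPathConnected S) [LocallyPathConnectedSpace S]
    (p : E' → E) (hp : IsCoveringMap p) [PathConnectedSpace E']
    (xh : E') (hmem : p xh ∈ S)
    (hrange : (piMap ⟨p, hp.continuous⟩ xh).range
      = (piMap ⟨(Subtype.val : S → E), continuous_subtype_val⟩ ⟨p xh, hmem⟩).range)
    (hnormal : (piMap ⟨p, hp.continuous⟩ xh).range.Normal) :
    ∀ yh ∈ p ⁻¹' S,
      ∃ h : (pathComponentIn (p ⁻¹' S) yh) ≃ₜ S,
        ∀ z : pathComponentIn (p ⁻¹' S) yh, (h z : E) = p (z : E') := by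
  intro yh hyh
  have : PathConnectedSpace S := isPathConnected_iff_pathConnectedSpace.mp hSpc
  have hranges := FundamentalGroup.range_map_subtypeVal_eq_of_normal _ hSpc
    (PathConnectedSpace.joined xh yh) hmem hyh hrange hnormal
  obtain ⟨F, ⟨hFy, hF⟩, -⟩ := hp.existsUnique_continuousMap_lifts_of_range_le
    (f := ⟨Subtype.val, continuous_subtype_val⟩) (a₀ := (⟨p yh, hyh⟩ : S)) rfl
    (by rw [FundamentalGroup.mapOfEq_rfl]; exact hranges.le)
  exact hFy ▸ hp.exists_homeomorph_pathComponentIn_of_lift F hF _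

/-- Remark after Proposition 3.1: if the Hawking cover `p : E' → E` associated to the
subgroup `i_*π₁(S, x)` of `π₁(E, x)` is a normal covering, then `p` maps *every* path
component of `p⁻¹(S)` homeomorphically onto `S`. -/
theorem every_component_homeomorphic_of_normal
    {E E' : Type u} [TopologicalSpace E] [TopologicalSpace E']
    [ConnectedSpace E] [LocallyPathConnectedSpace E]
    (S : Set E) (hSpc : IsPathConnected S) [LocallyPathConnectedSpace S]
    (p : E' → E) (hp : IsCoveringMap p) [PathConnectedSpace E']
    (xh : E') (hmem : p xh ∈ S)
    (hrange : (piMap ⟨p, hp.continuous⟩ xh).range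
      = (piMap ⟨(Subtype.val : S → E), continuous_subtype_val⟩ ⟨p xh, hmem⟩).range)
    (hnormal : (piMap ⟨p, hp.continuous⟩ xh).range.Normal) :
    ∀ yh ∈ p ⁻¹' S,
      ∃ h : (pathComponentIn (p ⁻¹' S) yh) ≃ₜ S,
        ∀ z : pathComponentIn (p ⁻¹' S) yh, (h z : E) = p (z : E') :=
  every_component_homeomorphic_of_normal_general S hSpc p hp xh hmem hrange hnormal
end

section
/- Let E be a path-connected, locally path-connected topological space, let S ⊆ E be a path-connected subspace with inclusion map i : S → E, and let x ∈ S. Suppose i_* : π₁(S, x) → π₁(E, x) is surjective. Let q : Ē → E be a covering map with Ē path-connected. Then q⁻¹(S) is path-connected. -/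
/-!
Fix a lift `e₀` of `x`. A point `y` of `q⁻¹(S)` is joined inside `q⁻¹(S)` to a point `e₁` of the
fiber over `x`, by lifting a path in `S` from `q y` to `x`. Since `E'` is path-connected, the
monodromy action of `π₁(E, x)` on the fiber is transitive, so some loop at `x` carries `e₀` to
`e₁`; by surjectivity this loop may be taken inside `S`, and then its lift from `e₀` joins `e₀`
to `e₁` inside `q⁻¹(S)`.
-/

open CategoryTheory

universe u

namespace IsCoveringMap

variable {E X : Type*} [TopologicalSpace E] [TopologicalSpace X] {p : E → X}

theorem joinedIn_monodromy (cov : IsCoveringMap p) {S : Set X} {x y : X} (γ : Path x y)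
    (hγ : ∀ t, γ t ∈ S) (e : p ⁻¹' {x}) :
    JoinedIn (p ⁻¹' S) e (cov.monodromy (.mk γ) e) :=
  have hγe : γ.toContinuousMap 0 = p e := γ.source.trans e.2.symm
  ⟨⟨cov.liftPath γ e hγe, cov.liftPath_zero .., rfl⟩, fun t => by
    change (p ∘ cov.liftPath γ e hγe) t ∈ S
    rw [cov.liftPath_lifts]
    exact hγ t⟩

theorem exists_monodromy_eq [PathConnectedSpace E] (cov : IsCoveringMap p) {x : X}
    (e₀ e₁ : p ⁻¹' {x}) : ∃ γ : Path.Homotopic.Quotient x x, cov.monodromy γ e₀ = e₁ :=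
  let Γ : Path.Homotopic.Quotient e₀.1 e₁ := .mk (PathConnectedSpace.somePath _ _)
  ⟨(Γ.map ⟨p, cov.continuous⟩).cast e₀.2.symm e₁.2.symm, cov.monodromy_eq_of_map_eq Γ rfl⟩

end IsCoveringMap

theorem preimage_pathConnected_of_pi1_surjective_general
    {E E' : Type u} [TopologicalSpace E] [TopologicalSpace E']
    [PathConnectedSpace E]
    (S : Set E) (hSpc : IsPathConnected S)
    (x : E) (hx : x ∈ S)
    (hsurj : Function.Surjective
      (piMap ⟨(Subtype.val : S → E), continuous_subtype_val⟩ ⟨x, hx⟩))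
    (q : E' → E) (hq : IsCoveringMap q) [PathConnectedSpace E'] :
    IsPathConnected (q ⁻¹' S) := by
  obtain ⟨e⟩ := PathConnectedSpace.nonempty (X := E')
  let e₀ : q ⁻¹' {x} := hq.monodromy (.mk (PathConnectedSpace.somePath (q e) x)) ⟨e, rfl⟩
  refine ⟨e₀, show q e₀ ∈ S from (Set.mem_singleton_iff.mp e₀.2).symm ▸ hx, fun {y} hy => ?_⟩
  have hβ : JoinedIn S (q y) x := hSpc.joinedIn _ hy x hx
  let e₁ := hq.monodromy (.mk hβ.somePath) ⟨y, rfl⟩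
  obtain ⟨γ, hγ⟩ := hq.exists_monodromy_eq e₀ e₁
  obtain ⟨⟨δ⟩, rfl⟩ := hsurj γ
  have h₀₁ : JoinedIn (q ⁻¹' S) e₀ e₁ :=
    hγ ▸ hq.joinedIn_monodromy (δ.map continuous_subtype_val) (fun t => (δ t).2) e₀
  exact h₀₁.trans (hq.joinedIn_monodromy _ hβ.somePath_mem _).symm

/-- First step of Proposition 3.2: if the inclusion `i : S → E` is surjective on
fundamental groups, then the preimage `q⁻¹(S)` of `S` under any covering
`q : E' → E` with path-connected total space is path-connected. -/
theorem preimage_pathConnected_of_pi1_surjective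
    {E E' : Type u} [TopologicalSpace E] [TopologicalSpace E']
    [PathConnectedSpace E] [LocallyPathConnectedSpace E]
    (S : Set E) (hSpc : IsPathConnected S)
    (x : E) (hx : x ∈ S)
    (hsurj : Function.Surjective
      (piMap ⟨(Subtype.val : S → E), continuous_subtype_val⟩ ⟨x, hx⟩))
    (q : E' → E) (hq : IsCoveringMap q) [PathConnectedSpace E'] :
    IsPathConnected (q ⁻¹' S) :=
  preimage_pathConnected_of_pi1_surjective_general S hSpc x hx hsurj q hq
end

section
/- Let E be a connected, locally path-connected topological space, let S ⊆ E be a path-connected, locally path-connected subspace with inclusion map i : S → E, and let x ∈ S. Suppose i_* : π₁(S, x) → π₁(E, x) is an isomorphism. Let p' : S̄ → S be a covering map with S̄ path-connected and let s̄ ∈ p'⁻¹(x). Let q : Ē → E be a covering map with Ē path-connected and let x̄ ∈ q⁻¹(x) satisfy q_*(π₁(Ē, x̄)) = (i ∘ p')_*(π₁(S̄, s̄)) as subgroups of π₁(E, x). Let φ̄ : S̄ → Ē be a continuous map with q ∘ φ̄ = i ∘ p' and φ̄(s̄) = x̄. Then φ̄ is a homeomorphism from S̄ onto q⁻¹(S)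 (with its subspace topology): φ̄ is injective, its image equals q⁻¹(S), and it is a homeomorphism onto its image. -/
open CategoryTheory

universe u

/-- Transport of fundamental groups along an equality of basepoints. -/
noncomputable def pi1Cast {X : Type u} [TopologicalSpace X] {a b : X} (h : a = b) :
    FundamentalGroup X a ≃* FundamentalGroup X b := by
  subst h; exact MulEquiv.refl _

/-!
Restricting `q` over `S` gives a covering `q' : q⁻¹(S) → S`, and `φ̄` corestricts to a map of
coverings of `S` from `p'` to `q'`. Surjectivity of `i_*` makes `q⁻¹(S)` path-connected: a path in
`Ē` from `x̄` to a point over `S` projects to a path homotopic to one inside `S`, whose lift joins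
the same endpoints within `q⁻¹(S)`. Injectivity of `i_*` turns `q_* π₁(Ē) = (i ∘ p')_* π₁(S̄)` into
`q'_* π₁(q⁻¹(S)) ≤ p'_* π₁(S̄)`, so by the lifting criterion `q'` lifts through `p'`; by uniqueness
of lifts, this lift is inverse to `φ̄`.
-/

open Function Set Topology

theorem FundamentalGroup.map_comp {X Y Z : Type*} [TopologicalSpace X] [TopologicalSpace Y]
    [TopologicalSpace Z] (g : C(Y, Z)) (f : C(X, Y)) (x : X) :
    map (g.comp f) x = (map g (f x)).comp (map f x) := by
  ext γ
  exact Quotient.inductionOn γ fun _ => rfl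

theorem FundamentalGroup.map_comp_mapOfEq {X Y Z : Type*} [TopologicalSpace X]
    [TopologicalSpace Y] [TopologicalSpace Z] (g : C(Y, Z)) (f : C(X, Y)) {x : X} {y : Y}
    (h : f x = y) : (map g y).comp (mapOfEq f h) = mapOfEq (g.comp f) (congrArg g h) := by
  subst h
  ext γ
  simp [mapOfEq_apply, Path.Homotopic.Quotient.map_comp]

theorem mapOfEq_eq_pi1Cast_comp {X Y : Type u} [TopologicalSpace X] [TopologicalSpace Y]
    (f : C(X, Y)) {x : X} {y : Y} (h : f x = y) :
    FundamentalGroup.mapOfEq f h = (pi1Cast h).toMonoidHom.comp (FundamentalGroup.map f x) := by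
  subst h
  ext γ
  simp [FundamentalGroup.mapOfEq_apply, pi1Cast]

theorem IsLocalHomeomorph.locallyPathConnectedSpace {X Y : Type*} [TopologicalSpace X]
    [TopologicalSpace Y] [LocallyPathConnectedSpace Y] {f : X → Y} (hf : IsLocalHomeomorph f) :
    LocallyPathConnectedSpace X where
  path_connected_basis x := by
    rw [Filter.hasBasis_self]
    intro s hs
    obtain ⟨e, hxe, rfl⟩ := hf x
    have hs' : e '' (s ∩ e.source) ∈ 𝓝 (e x) :=
      e.image_mem_nhds hxe (Filter.inter_mem hs (e.open_source.mem_nhds hxe))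
    obtain ⟨t, ⟨ht, htpc⟩, hts⟩ := (path_connected_basis (e x)).mem_iff.mp hs'
    have htarget : t ⊆ e.target := hts.trans (e.mapsTo.mono_left inter_subset_right).image_subset
    refine ⟨e.symm '' t, ?_, htpc.image' (e.continuousOn_symm.mono htarget), ?_⟩
    · rw [e.symm_image_eq_source_inter_preimage htarget]
      exact Filter.inter_mem (e.open_source.mem_nhds hxe) (e.continuousAt hxe ht)
    · calc e.symm '' t ⊆ e.symm '' (e '' (s ∩ e.source)) := image_mono hts
        _ = s ∩ e.source := e.symm_image_image_of_subset_source inter_subset_right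
        _ ⊆ s := inter_subset_left

theorem IsCoveringMap.exists_path_map_eq_of_homotopic {E X : Type*} [TopologicalSpace E]
    [TopologicalSpace X] {p : E → X} (hp : IsCoveringMap p) {e₀ e₁ : E} (δ : Path e₀ e₁)
    {γ : Path (p e₀) (p e₁)} (h : γ.Homotopic (δ.map hp.continuous)) :
    ∃ Γ : Path e₀ e₁, Γ.map hp.continuous = γ := by
  have hδ : δ.toContinuousMap =
      hp.liftPath (δ.map hp.continuous).toContinuousMap e₀ (δ.map hp.continuous).source :=
    (hp.eq_liftPath_iff' _).2 ⟨rfl, δ.source⟩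
  refine ⟨⟨hp.liftPath γ.toContinuousMap e₀ γ.source, hp.liftPath_zero .., ?_⟩, ?_⟩
  · show hp.liftPath γ.toContinuousMap e₀ γ.source 1 = e₁
    rw [hp.liftPath_apply_one_eq_of_homotopicRel h e₀ γ.source (δ.map hp.continuous).source, ← hδ]
    exact δ.target
  · ext t
    exact congrFun (hp.liftPath_lifts γ.toContinuousMap e₀ γ.source) t

theorem IsCoveringMap.isPathConnected_preimage {E X : Type*} [TopologicalSpace E]
    [TopologicalSpace X] [PathConnectedSpace E] {p : E → X} (hp : IsCoveringMap p) {S : Set X}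
    (hS : IsPathConnected S) {e₀ : E} (he₀ : p e₀ ∈ S)
    (hsurj : Surjective
      (FundamentalGroup.map ⟨((↑) : S → X), continuous_subtype_val⟩ ⟨p e₀, he₀⟩)) :
    IsPathConnected (p ⁻¹' S) := by
  refine ⟨e₀, he₀, fun {e} he => ?_⟩
  let δ := (PathConnectedSpace.somePath e₀ e).map hp.continuous
  let γ : Path (⟨p e₀, he₀⟩ : S) ⟨p e, he⟩ := (hS.joinedIn _ he₀ _ he).joined_subtype.somePath
  let ℓ := δ.trans (γ.map continuous_subtype_val).symm
  obtain ⟨⟨τ⟩, hτ⟩ := hsurj (Path.Homotopic.Quotient.mk ℓ)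
  replace hτ : Path.Homotopic.Quotient.mk (τ.map continuous_subtype_val) =
      Path.Homotopic.Quotient.mk ℓ := hτ
  have hτγ : ((τ.trans γ).map continuous_subtype_val).Homotopic δ := by
    rw [← Path.Homotopic.Quotient.eq, Path.map_trans, Path.Homotopic.Quotient.mk_trans, hτ,
      Path.Homotopic.Quotient.mk_trans, Path.Homotopic.Quotient.mk_symm,
      Path.Homotopic.Quotient.trans_assoc, Path.Homotopic.Quotient.symm_trans,
      Path.Homotopic.Quotient.trans_refl]
  obtain ⟨Γ, hΓ⟩ := hp.exists_path_map_eq_of_homotopic _ hτγ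
  refine ⟨Γ, fun t => ?_⟩
  rw [mem_preimage, show p (Γ t) = (τ.trans γ t : X) from congrArg (· t) hΓ]
  exact Subtype.prop _

theorem IsCoveringMap.isHomeomorph_of_range_map_le {X Y B : Type*} [TopologicalSpace X]
    [TopologicalSpace Y] [TopologicalSpace B] [PreconnectedSpace X] [PathConnectedSpace Y]
    [LocallyPathConnectedSpace Y] {p : X → B} {r : Y → B} (hp : IsCoveringMap p)
    (hr : IsCoveringMap r) {φ : X → Y} (hφ : Continuous φ) (hcomm : r ∘ φ = p) {x₀ : X} {y₀ : Y}
    (hφ₀ : φ x₀ = y₀) (h₀ : p x₀ = r y₀)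
    (hle : (FundamentalGroup.map ⟨r, hr.continuous⟩ y₀).range ≤
      (FundamentalGroup.mapOfEq ⟨p, hp.continuous⟩ h₀).range) :
    IsHomeomorph φ := by
  obtain ⟨ψ, ⟨hψ₀, hψ⟩, -⟩ := hp.existsUnique_continuousMap_lifts_of_range_le h₀ hle
  have hψφ : ψ ∘ φ = id := hp.eq_of_comp_eq (ψ.continuous.comp hφ) continuous_id
    (by rw [← comp_assoc, hψ]; exact hcomm) x₀ (by simp [hφ₀, hψ₀])
  have hφψ : φ ∘ ψ = id := hr.eq_of_comp_eq (hφ.comp ψ.continuous) continuous_id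
    (by rw [← comp_assoc, hcomm, hψ]; rfl) y₀ (by simp [hφ₀, hψ₀])
  exact (Homeomorph.mk ⟨φ, ψ, congrFun hψφ, congrFun hφψ⟩ hφ ψ.continuous).isHomeomorph

open FundamentalGroup in
theorem range_map_restrictPreimage_le {E Eb Sb : Type u} [TopologicalSpace E]
    [TopologicalSpace Eb] [TopologicalSpace Sb] {S : Set E} {q : Eb → E} (hq : Continuous q)
    {xb : Eb} (hmem : q xb ∈ S)
    (hinj : Injective (piMap ⟨(Subtype.val : S → E), continuous_subtype_val⟩ ⟨q xb, hmem⟩))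
    {p' : Sb → S} (hp' : Continuous p') {sb : Sb} (hsb : p' sb = ⟨q xb, hmem⟩)
    (hle : (piMap ⟨q, hq⟩ xb).range ≤
      Subgroup.map (pi1Cast (congrArg Subtype.val hsb)).toMonoidHom
        (piMap ((⟨(Subtype.val : S → E), continuous_subtype_val⟩ : C(S, E)).comp ⟨p', hp'⟩)
          sb).range) :
    (map ⟨S.restrictPreimage q, hq.restrictPreimage⟩ ⟨xb, hmem⟩).range ≤
      (mapOfEq ⟨p', hp'⟩ hsb).range := by
  let valS : C(S, E) := ⟨Subtype.val, continuous_subtype_val⟩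
  let valT : C(q ⁻¹' S, Eb) := ⟨Subtype.val, continuous_subtype_val⟩
  let q' : C(q ⁻¹' S, S) := ⟨S.restrictPreimage q, hq.restrictPreimage⟩
  rintro _ ⟨a, rfl⟩
  obtain ⟨_, ⟨m, rfl⟩, hm⟩ := hle ⟨map valT ⟨xb, hmem⟩ a, rfl⟩
  refine ⟨m, hinj ?_⟩
  have hcomp : map valS _ (map q' ⟨xb, hmem⟩ a) = map ⟨q, hq⟩ xb (map valT ⟨xb, hmem⟩ a) :=
    (DFunLike.congr_fun (map_comp valS q' _) a).symm.trans
      (DFunLike.congr_fun (map_comp ⟨q, hq⟩ valT _) a)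
  refine ((DFunLike.congr_fun (map_comp_mapOfEq valS ⟨p', hp'⟩ hsb) m).trans ?_).trans hcomp.symm
  exact (DFunLike.congr_fun (mapOfEq_eq_pi1Cast_comp _ _) m).trans hm

theorem lift_homeomorphism_onto_preimage_general
    {E Sb Eb : Type u} [TopologicalSpace E] [TopologicalSpace Sb] [TopologicalSpace Eb]
    (S : Set E) (hSpc : IsPathConnected S) [LocallyPathConnectedSpace S]
    (q : Eb → E) (hq : IsCoveringMap q) [PathConnectedSpace Eb]
    (xb : Eb) (hmem : q xb ∈ S)
    (hbij : Function.Bijective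
      (piMap ⟨(Subtype.val : S → E), continuous_subtype_val⟩ ⟨q xb, hmem⟩))
    (p' : Sb → S) (hp' : IsCoveringMap p') [PathConnectedSpace Sb]
    (sb : Sb) (hsb : p' sb = ⟨q xb, hmem⟩)
    (hrangeq : (piMap ⟨q, hq.continuous⟩ xb).range
      = Subgroup.map (pi1Cast (congrArg Subtype.val hsb)).toMonoidHom
          (piMap ((⟨(Subtype.val : S → E), continuous_subtype_val⟩ : C(S, E)).comp
            ⟨p', hp'.continuous⟩) sb).range)
    (phib : Sb → Eb) (hphib_cont : Continuous phib)
    (hcomm : ∀ y : Sb, q (phib y) = ((p' y : S) : E))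
    (hbase : phib sb = xb) :
    Function.Injective phib ∧ Set.range phib = q ⁻¹' S ∧ Topology.IsEmbedding phib := by
  let φ : Sb → q ⁻¹' S := fun y => ⟨phib y, show q (phib y) ∈ S from hcomm y ▸ (p' y).2⟩
  have := isPathConnected_iff_pathConnectedSpace.mp (hq.isPathConnected_preimage hSpc hmem hbij.2)
  have := IsLocalHomeomorph.locallyPathConnectedSpace (hq.restrictPreimage S).isLocalHomeomorph
  have hφ : IsHomeomorph φ :=
    hp'.isHomeomorph_of_range_map_le (hq.restrictPreimage S) (hphib_cont.subtype_mk _)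
      (funext fun y => Subtype.ext (hcomm y)) (Subtype.ext hbase) hsb
      (range_map_restrictPreimage_le hq.continuous hmem hbij.1 hp'.continuous hsb hrangeq.le)
  have hemb : IsEmbedding phib := IsEmbedding.subtypeVal.comp hφ.isEmbedding
  refine ⟨hemb.injective, ?_, hemb⟩
  rw [show phib = Subtype.val ∘ φ from rfl, range_comp, hφ.surjective.range_eq, image_univ,
    Subtype.range_coe]

/-- Proposition 3.2: with `i_* : π₁(S,x) → π₁(E,x)` an isomorphism, `p' : Sb → S` a
covering, and `q : Eb → E` the covering corresponding to the subgroup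
`(i ∘ p')_*π₁(Sb, sb)`, the lift `φ̄ : Sb → Eb` of `i ∘ p'` is a homeomorphism onto
`q⁻¹(S)`. -/
theorem lift_homeomorphism_onto_preimage
    {E Sb Eb : Type u} [TopologicalSpace E] [TopologicalSpace Sb] [TopologicalSpace Eb]
    [ConnectedSpace E] [LocallyPathConnectedSpace E]
    (S : Set E) (hSpc : IsPathConnected S) [LocallyPathConnectedSpace S]
    (q : Eb → E) (hq : IsCoveringMap q) [PathConnectedSpace Eb]
    (xb : Eb) (hmem : q xb ∈ S)
    (hbij : Function.Bijective
      (piMap ⟨(Subtype.val : S → E), continuous_subtype_val⟩ ⟨q xb, hmem⟩))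
    (p' : Sb → S) (hp' : IsCoveringMap p') [PathConnectedSpace Sb]
    (sb : Sb) (hsb : p' sb = ⟨q xb, hmem⟩)
    (hrangeq : (piMap ⟨q, hq.continuous⟩ xb).range
      = Subgroup.map (pi1Cast (congrArg Subtype.val hsb)).toMonoidHom
          (piMap ((⟨(Subtype.val : S → E), continuous_subtype_val⟩ : C(S, E)).comp
            ⟨p', hp'.continuous⟩) sb).range)
    (phib : Sb → Eb) (hphib_cont : Continuous phib)
    (hcomm : ∀ y : Sb, q (phib y) = ((p' y : S) : E))
    (hbase : phib sb = xb) :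
    Function.Injective phib ∧ Set.range phib = q ⁻¹' S ∧ Topology.IsEmbedding phib :=
  lift_homeomorphism_onto_preimage_general S hSpc q hq xb hmem hbij p' hp' sb hsb hrangeq phib
    hphib_cont hcomm hbase
end
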